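/- Let d ≥ 1 and p ≥ 1 be natural numbers and let G : ℝ^d → ℝ^{d×p} (d-by-p real matrices) be twice continuously differentiable with all second-order partial derivatives bounded in norm by K. Fix z ∈ ℝ^d. Then there exists a constant c depending only on d and p such that for every σ > 0, if η is a random vector in ℝ^d with i.i.d. N(0, σ²) coordinates, then ‖ E[G(z + η)ᵀ η] − σ² Σ_{i=1}^d (∂G/∂z_i)(z)ᵀ e_i ‖ ≤ c · K · σ³, where e_i denotes the i-th standard basis vector of ℝ^d. -/

import Mathlib

open MeasureTheory ProbabilityTheory Real
open scoped NNReal ENNReal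

/-- Partial derivative of a scalar function on `ℝ^d` along the `i`-th coordinate. -/
noncomputable def pd {d : ℕ} (h : (Fin d → ℝ) → ℝ) (i : Fin d) : (Fin d → ℝ) → ℝ :=
  fun z => deriv (fun t => h (Function.update z i t)) (z i)


noncomputable def mcube : ℝ := ∫ x : ℝ, |x| ^ 3 * Real.exp (-(1:ℝ) * x ^ 2)

lemma mcube_nonneg : 0 ≤ mcube :=
  integral_nonneg fun x => mul_nonneg (pow_nonneg (abs_nonneg x) 3) (Real.exp_pos _).le

section OneDim

variable {b : ℝ}

lemma hderiv_exp (b : ℝ) (x : ℝ) :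
    HasDerivAt (fun y : ℝ => Real.exp (-b * y ^ 2)) (Real.exp (-b * x ^ 2) * (-b * (2 * x))) x := by
  have h1 : HasDerivAt (fun y : ℝ => -b * y ^ 2) (-b * (2 * x)) x := by
    simpa using (hasDerivAt_pow 2 x).const_mul (-b)
  exact h1.exp

lemma int_exp (hb : 0 < b) : Integrable fun x : ℝ => Real.exp (-b * x ^ 2) :=
  integrable_exp_neg_mul_sq hb

lemma bound_sq_exp (hb : 0 < b) (x : ℝ) :
    x ^ 2 * Real.exp (-b * x ^ 2) ≤ 2 / b * Real.exp (-(b / 2) * x ^ 2) := by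
  have h1 : b / 2 * x ^ 2 ≤ Real.exp (b / 2 * x ^ 2) :=
    (le_add_of_nonneg_right zero_le_one).trans (Real.add_one_le_exp _)
  have h2 : x ^ 2 ≤ 2 / b * Real.exp (b / 2 * x ^ 2) := by
    have h2' := mul_le_mul_of_nonneg_left h1 (by positivity : (0:ℝ) ≤ 2 / b)
    have e : 2 / b * (b / 2 * x ^ 2) = x ^ 2 := by
      field_simp
    rwa [e] at h2'
  calc x ^ 2 * Real.exp (-b * x ^ 2)
      ≤ 2 / b * Real.exp (b / 2 * x ^ 2) * Real.exp (-b * x ^ 2) :=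
        mul_le_mul_of_nonneg_right h2 (Real.exp_pos _).le
    _ = 2 / b * Real.exp (-(b / 2) * x ^ 2) := by
        rw [mul_assoc, ← Real.exp_add]
        ring_nf

lemma int_sq_exp (hb : 0 < b) : Integrable fun x : ℝ => x ^ 2 * Real.exp (-b * x ^ 2) := by
  refine ((int_exp (half_pos hb)).const_mul (2 / b)).mono' ?_ ?_
  · exact ((continuous_pow 2).mul (by continuity)).aestronglyMeasurable
  · refine Filter.Eventually.of_forall fun x => ?_
    rw [Real.norm_eq_abs, abs_of_nonneg (by positivity)]
    exact bound_sq_exp hb x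

lemma int_cube_exp (hb : 0 < b) : Integrable fun x : ℝ => |x| ^ 3 * Real.exp (-b * x ^ 2) := by
  refine (((integrable_mul_exp_neg_mul_sq (half_pos hb)).abs).const_mul (2 / b)).mono' ?_ ?_
  · exact ((continuous_abs.pow 3).mul (by continuity)).aestronglyMeasurable
  · refine Filter.Eventually.of_forall fun x => ?_
    rw [Real.norm_eq_abs, abs_of_nonneg (by positivity)]
    have h3 : |x| ^ 3 * Real.exp (-b * x ^ 2) = |x| * (x ^ 2 * Real.exp (-b * x ^ 2)) := by
      rw [pow_succ, sq_abs]
      ring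
    rw [h3]
    calc |x| * (x ^ 2 * Real.exp (-b * x ^ 2))
        ≤ |x| * (2 / b * Real.exp (-(b / 2) * x ^ 2)) :=
          mul_le_mul_of_nonneg_left (bound_sq_exp hb x) (abs_nonneg x)
      _ = 2 / b * |x * Real.exp (-(b / 2) * x ^ 2)| := by
          rw [abs_mul, abs_of_nonneg (Real.exp_pos _).le]
          ring

lemma integral_x_exp (hb : 0 < b) : ∫ x : ℝ, x * Real.exp (-b * x ^ 2) = 0 := by
  have hb' : b ≠ 0 := hb.ne'
  have hd : ∀ x : ℝ, HasDerivAt (fun y : ℝ => -(2 * b)⁻¹ * Real.exp (-b * y ^ 2))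
      (x * Real.exp (-b * x ^ 2)) x := by
    intro x
    have h := (hderiv_exp b x).const_mul (-(2 * b)⁻¹)
    refine h.congr_deriv ?_
    field_simp
  exact integral_eq_zero_of_hasDerivAt_of_integrable hd (integrable_mul_exp_neg_mul_sq hb)
    ((int_exp hb).const_mul _)

lemma integral_sq_exp (hb : 0 < b) :
    ∫ x : ℝ, x ^ 2 * Real.exp (-b * x ^ 2) = (2 * b)⁻¹ * Real.sqrt (π / b) := by
  have hb' : b ≠ 0 := hb.ne'
  have hd : ∀ x : ℝ, HasDerivAt (fun y : ℝ => -(2 * b)⁻¹ * (y * Real.exp (-b * y ^ 2)))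
      (x ^ 2 * Real.exp (-b * x ^ 2) - (2 * b)⁻¹ * Real.exp (-b * x ^ 2)) x := by
    intro x
    have h := ((hasDerivAt_id' (x := x)).mul (hderiv_exp b x)).const_mul (-(2 * b)⁻¹)
    refine h.congr_deriv ?_
    field_simp
    ring
  have h0 : ∫ x : ℝ, (x ^ 2 * Real.exp (-b * x ^ 2) - (2 * b)⁻¹ * Real.exp (-b * x ^ 2)) = 0 :=
    integral_eq_zero_of_hasDerivAt_of_integrable hd
      ((int_sq_exp hb).sub ((int_exp hb).const_mul _))
      ((integrable_mul_exp_neg_mul_sq hb).const_mul _)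
  rw [integral_sub (int_sq_exp hb) ((int_exp hb).const_mul _), sub_eq_zero] at h0
  rw [h0, integral_const_mul, integral_gaussian]

lemma integral_cube_exp (hb : 0 < b) :
    ∫ x : ℝ, |x| ^ 3 * Real.exp (-b * x ^ 2) = (b ^ 2)⁻¹ * mcube := by
  have hs : 0 < Real.sqrt b := Real.sqrt_pos.2 hb
  have h := MeasureTheory.Measure.integral_comp_mul_left
    (fun y : ℝ => |y| ^ 3 * Real.exp (-(1:ℝ) * y ^ 2)) (Real.sqrt b)
  have heq : ∀ x : ℝ, |Real.sqrt b * x| ^ 3 * Real.exp (-(1:ℝ) * (Real.sqrt b * x) ^ 2)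
      = Real.sqrt b ^ 3 * (|x| ^ 3 * Real.exp (-b * x ^ 2)) := by
    intro x
    rw [abs_mul, abs_of_nonneg (Real.sqrt_nonneg b), mul_pow, mul_pow, Real.sq_sqrt hb.le]
    ring
  simp only [heq] at h
  rw [integral_const_mul, abs_of_nonneg (inv_nonneg.2 (Real.sqrt_nonneg b)), smul_eq_mul] at h
  have hb2 : Real.sqrt b ^ 2 = b := Real.sq_sqrt hb.le
  have hb4 : Real.sqrt b ^ 3 * Real.sqrt b = b ^ 2 := by nlinarith [hb2]
  have hs3 : Real.sqrt b ^ 3 ≠ 0 := pow_ne_zero _ hs.ne'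
  have : (∫ x : ℝ, |x| ^ 3 * Real.exp (-b * x ^ 2))
      = (Real.sqrt b ^ 3)⁻¹ * ((Real.sqrt b)⁻¹ * mcube) := by
    unfold mcube
    rw [← h, ← mul_assoc, inv_mul_cancel₀ hs3, one_mul]
  rw [this, ← mul_assoc, ← mul_inv, hb4]

end OneDim

section GaussMoments

variable {σ : ℝ}

lemma vσ_ne (hσ : 0 < σ) : (Real.toNNReal (σ ^ 2)) ≠ 0 :=
  (Real.toNNReal_pos.2 (by positivity)).ne'

lemma hb_pos (hσ : 0 < σ) : 0 < (2 * σ ^ 2)⁻¹ := by positivity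

lemma pdf_eq (hσ : 0 < σ) (x : ℝ) :
    gaussianPDFReal 0 (Real.toNNReal (σ ^ 2)) x
      = (Real.sqrt (2 * π * σ ^ 2))⁻¹ * Real.exp (-(2 * σ ^ 2)⁻¹ * x ^ 2) := by
  have hc : ((Real.toNNReal (σ ^ 2) : ℝ≥0) : ℝ) = σ ^ 2 := Real.coe_toNNReal _ (sq_nonneg σ)
  unfold gaussianPDFReal
  rw [hc, sub_zero]
  congr 1
  ring

lemma integral_gaussianReal_fun (hσ : 0 < σ) (f : ℝ → ℝ) :
    ∫ x, f x ∂(gaussianReal 0 (Real.toNNReal (σ ^ 2)))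
      = ∫ x, f x * gaussianPDFReal 0 (Real.toNNReal (σ ^ 2)) x := by
  rw [gaussianReal_of_var_ne_zero _ (vσ_ne hσ)]
  have hpdf : (gaussianPDF 0 (Real.toNNReal (σ ^ 2)))
      = fun x => ((Real.toNNReal (gaussianPDFReal 0 (Real.toNNReal (σ ^ 2)) x) : ℝ≥0) : ℝ≥0∞) :=
    rfl
  rw [hpdf, integral_withDensity_eq_integral_smul
    ((measurable_gaussianPDFReal _ _).real_toNNReal) f]
  congr 1
  funext x
  rw [NNReal.smul_def, Real.coe_toNNReal _ (gaussianPDFReal_nonneg _ _ x), smul_eq_mul, mul_comm]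

lemma integrable_gaussianReal_fun (hσ : 0 < σ) {f g : ℝ → ℝ} (hg : Integrable g)
    (hfg : ∀ x, gaussianPDFReal 0 (Real.toNNReal (σ ^ 2)) x * f x = g x) :
    Integrable f (gaussianReal 0 (Real.toNNReal (σ ^ 2))) := by
  rw [gaussianReal_of_var_ne_zero _ (vσ_ne hσ)]
  have hpdf : (gaussianPDF 0 (Real.toNNReal (σ ^ 2)))
      = fun x => ((Real.toNNReal (gaussianPDFReal 0 (Real.toNNReal (σ ^ 2)) x) : ℝ≥0) : ℝ≥0∞) :=
    rfl
  rw [hpdf, integrable_withDensity_iff_integrable_smul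
    ((measurable_gaussianPDFReal _ _).real_toNNReal)]
  have : (fun x => (Real.toNNReal (gaussianPDFReal 0 (Real.toNNReal (σ ^ 2)) x)) • f x) = g := by
    funext x
    rw [NNReal.smul_def, Real.coe_toNNReal _ (gaussianPDFReal_nonneg _ _ x), smul_eq_mul, hfg]
  rw [this]
  exact hg

lemma integrable_id_g (hσ : 0 < σ) :
    Integrable (fun x : ℝ => x) (gaussianReal 0 (Real.toNNReal (σ ^ 2))) := by
  refine integrable_gaussianReal_fun hσ
    (((integrable_mul_exp_neg_mul_sq (hb_pos hσ)).const_mul ((Real.sqrt (2 * π * σ ^ 2))⁻¹)))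
    fun x => ?_
  rw [pdf_eq hσ]
  ring

lemma integrable_sq_g (hσ : 0 < σ) :
    Integrable (fun x : ℝ => x ^ 2) (gaussianReal 0 (Real.toNNReal (σ ^ 2))) := by
  refine integrable_gaussianReal_fun hσ
    (((int_sq_exp (hb_pos hσ)).const_mul ((Real.sqrt (2 * π * σ ^ 2))⁻¹)))
    fun x => ?_
  rw [pdf_eq hσ]
  ring

lemma integrable_cube_g (hσ : 0 < σ) :
    Integrable (fun x : ℝ => |x| ^ 3) (gaussianReal 0 (Real.toNNReal (σ ^ 2))) := by
  refine integrable_gaussianReal_fun hσ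
    (((int_cube_exp (hb_pos hσ)).const_mul ((Real.sqrt (2 * π * σ ^ 2))⁻¹)))
    fun x => ?_
  rw [pdf_eq hσ]
  ring

lemma gmean (hσ : 0 < σ) : ∫ x, x ∂(gaussianReal 0 (Real.toNNReal (σ ^ 2))) = 0 := by
  rw [integral_gaussianReal_fun hσ]
  have h : (fun x : ℝ => x * gaussianPDFReal 0 (Real.toNNReal (σ ^ 2)) x)
      = fun x => (Real.sqrt (2 * π * σ ^ 2))⁻¹ * (x * Real.exp (-(2 * σ ^ 2)⁻¹ * x ^ 2)) := by
    funext x; rw [pdf_eq hσ]; ring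
  rw [h, integral_const_mul, integral_x_exp (hb_pos hσ), mul_zero]

lemma gsq (hσ : 0 < σ) : ∫ x, x ^ 2 ∂(gaussianReal 0 (Real.toNNReal (σ ^ 2))) = σ ^ 2 := by
  rw [integral_gaussianReal_fun hσ]
  have h : (fun x : ℝ => x ^ 2 * gaussianPDFReal 0 (Real.toNNReal (σ ^ 2)) x)
      = fun x => (Real.sqrt (2 * π * σ ^ 2))⁻¹ * (x ^ 2 * Real.exp (-(2 * σ ^ 2)⁻¹ * x ^ 2)) := by
    funext x; rw [pdf_eq hσ]; ring
  rw [h, integral_const_mul, integral_sq_exp (hb_pos hσ)]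
  have h1 : π / (2 * σ ^ 2)⁻¹ = 2 * π * σ ^ 2 := by
    field_simp
  have h2 : (2 * (2 * σ ^ 2)⁻¹)⁻¹ = σ ^ 2 := by
    rw [mul_inv, inv_inv]
    field_simp
  rw [h1, h2]
  have hs : 0 < Real.sqrt (2 * π * σ ^ 2) := Real.sqrt_pos.2 (by positivity)
  field_simp

lemma gcube (hσ : 0 < σ) :
    ∫ x, |x| ^ 3 ∂(gaussianReal 0 (Real.toNNReal (σ ^ 2))) ≤ 4 * mcube * σ ^ 3 := by
  rw [integral_gaussianReal_fun hσ]
  have h : (fun x : ℝ => |x| ^ 3 * gaussianPDFReal 0 (Real.toNNReal (σ ^ 2)) x)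
      = fun x => (Real.sqrt (2 * π * σ ^ 2))⁻¹ * (|x| ^ 3 * Real.exp (-(2 * σ ^ 2)⁻¹ * x ^ 2)) := by
    funext x; rw [pdf_eq hσ]; ring
  rw [h, integral_const_mul, integral_cube_exp (hb_pos hσ)]
  have h1 : (((2 * σ ^ 2)⁻¹) ^ 2)⁻¹ = 4 * σ ^ 4 := by
    rw [← inv_pow, inv_inv]
    ring
  rw [h1]
  have hσs : σ ≤ Real.sqrt (2 * π * σ ^ 2) := by
    have h2 : σ ^ 2 ≤ 2 * π * σ ^ 2 := by nlinarith [Real.pi_gt_three, sq_nonneg σ]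
    calc σ = Real.sqrt (σ ^ 2) := (Real.sqrt_sq hσ.le).symm
      _ ≤ Real.sqrt (2 * π * σ ^ 2) := Real.sqrt_le_sqrt h2
  have hinv : (Real.sqrt (2 * π * σ ^ 2))⁻¹ ≤ σ⁻¹ := by
    exact inv_anti₀ hσ hσs
  calc (Real.sqrt (2 * π * σ ^ 2))⁻¹ * (4 * σ ^ 4 * mcube)
      ≤ σ⁻¹ * (4 * σ ^ 4 * mcube) := by
        have hm := mcube_nonneg
        have : (0:ℝ) ≤ 4 * σ ^ 4 * mcube := by positivity
        exact mul_le_mul_of_nonneg_right hinv this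
    _ = 4 * mcube * σ ^ 3 := by
        field_simp

end GaussMoments

section PiMeasure

variable {d : ℕ} (ν : Measure ℝ) [IsProbabilityMeasure ν]

lemma pi_integrable_prod (f : Fin d → ℝ → ℝ) (hf : ∀ i, Integrable (f i) ν) :
    Integrable (fun x : Fin d → ℝ => ∏ i, f i (x i)) (Measure.pi fun _ => ν) := by
  letI : MeasureSpace ℝ := ⟨ν⟩
  haveI : SigmaFinite (volume : Measure ℝ) := by
    show SigmaFinite ν
    infer_instance
  exact MeasureTheory.Integrable.fintype_prod (f := f) hf

lemma pi_integral_prod (f : Fin d → ℝ → ℝ) :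
    ∫ x : Fin d → ℝ, ∏ i, f i (x i) ∂(Measure.pi fun _ => ν) = ∏ i, ∫ t, f i t ∂ν := by
  letI : MeasureSpace ℝ := ⟨ν⟩
  haveI : SigmaFinite (volume : Measure ℝ) := by
    show SigmaFinite ν
    infer_instance
  exact MeasureTheory.integral_fintype_prod_eq_prod f

lemma pi_integrable_eval {g : ℝ → ℝ} (hg : Integrable g ν) (k : Fin d) :
    Integrable (fun x : Fin d → ℝ => g (x k)) (Measure.pi fun _ => ν) := by
  have h := pi_integrable_prod ν (fun i => if i = k then g else fun _ => 1)
    (fun i => by by_cases hik : i = k <;> simp [hik, hg])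
  have h1 : (fun x : Fin d → ℝ => ∏ i, (if i = k then g else fun _ => (1:ℝ)) (x i))
      = fun x : Fin d → ℝ => g (x k) := by
    funext x
    have e : ∀ i, (if i = k then g else fun _ => (1:ℝ)) (x i) = if i = k then g (x i) else 1 :=
      fun i => by by_cases hik : i = k <;> simp [hik]
    simp only [e, Finset.prod_ite_eq' Finset.univ k (fun i => g (x i)), Finset.mem_univ, if_true]
  rwa [h1] at h

lemma pi_integral_eval (g : ℝ → ℝ) (k : Fin d) :
    ∫ x : Fin d → ℝ, g (x k) ∂(Measure.pi fun _ => ν) = ∫ t, g t ∂ν := by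
  have h := pi_integral_prod ν (fun i => if i = k then g else fun _ => 1)
  have h1 : (fun x : Fin d → ℝ => ∏ i, (if i = k then g else fun _ => (1:ℝ)) (x i))
      = fun x : Fin d → ℝ => g (x k) := by
    funext x
    have e : ∀ i, (if i = k then g else fun _ => (1:ℝ)) (x i) = if i = k then g (x i) else 1 :=
      fun i => by by_cases hik : i = k <;> simp [hik]
    simp only [e, Finset.prod_ite_eq' Finset.univ k (fun i => g (x i)), Finset.mem_univ, if_true]
  have h2 : ∏ i, ∫ t, (if i = k then g else fun _ => (1:ℝ)) t ∂ν = ∫ t, g t ∂ν := by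
    have e : ∀ i : Fin d, (∫ t, (if i = k then g else fun _ => (1:ℝ)) t ∂ν)
        = if i = k then ∫ t, g t ∂ν else 1 :=
      fun i => by by_cases hik : i = k <;> simp [hik]
    simp only [e, Finset.prod_ite_eq' Finset.univ k (fun _ => ∫ t, g t ∂ν), Finset.mem_univ,
      if_true]
  rw [h1, h2] at h
  exact h

lemma pi_integrable_eval2 {g h : ℝ → ℝ} (hg : Integrable g ν) (hh : Integrable h ν)
    {k l : Fin d} (hkl : k ≠ l) :
    Integrable (fun x : Fin d → ℝ => g (x k) * h (x l)) (Measure.pi fun _ => ν) := by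
  have hint := pi_integrable_prod ν
    (fun i => if i = k then g else if i = l then h else fun _ => 1)
    (fun i => by
      by_cases hik : i = k
      · simp [hik, hg]
      · by_cases hil : i = l <;> simp [hik, hil, Ne.symm hkl, hh])
  have h1 : (fun x : Fin d → ℝ =>
        ∏ i, (if i = k then g else if i = l then h else fun _ => (1:ℝ)) (x i))
      = fun x : Fin d → ℝ => g (x k) * h (x l) := by
    funext x
    have e : ∀ i, (if i = k then g else if i = l then h else fun _ => (1:ℝ)) (x i)
        = (if i = k then g (x i) else 1) * (if i = l then h (x i) else 1) := by
      intro i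
      by_cases hik : i = k
      · subst hik
        simp [hkl]
      · by_cases hil : i = l <;> simp [hik, hil, Ne.symm hkl]
    simp only [e, Finset.prod_mul_distrib,
      Finset.prod_ite_eq' Finset.univ k (fun i => g (x i)),
      Finset.prod_ite_eq' Finset.univ l (fun i => h (x i)), Finset.mem_univ, if_true]
  rwa [h1] at hint

lemma pi_integral_eval2 (g h : ℝ → ℝ) {k l : Fin d} (hkl : k ≠ l) :
    ∫ x : Fin d → ℝ, g (x k) * h (x l) ∂(Measure.pi fun _ => ν)
      = (∫ t, g t ∂ν) * ∫ t, h t ∂ν := by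
  have hint := pi_integral_prod ν
    (fun i => if i = k then g else if i = l then h else fun _ => 1)
  have h1 : (fun x : Fin d → ℝ =>
        ∏ i, (if i = k then g else if i = l then h else fun _ => (1:ℝ)) (x i))
      = fun x : Fin d → ℝ => g (x k) * h (x l) := by
    funext x
    have e : ∀ i, (if i = k then g else if i = l then h else fun _ => (1:ℝ)) (x i)
        = (if i = k then g (x i) else 1) * (if i = l then h (x i) else 1) := by
      intro i
      by_cases hik : i = k
      · subst hik
        simp [hkl]
      · by_cases hil : i = l <;> simp [hik, hil, Ne.symm hkl]
    simp only [e, Finset.prod_mul_distrib,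
      Finset.prod_ite_eq' Finset.univ k (fun i => g (x i)),
      Finset.prod_ite_eq' Finset.univ l (fun i => h (x i)), Finset.mem_univ, if_true]
  have h2 : ∏ i, ∫ t, (if i = k then g else if i = l then h else fun _ => (1:ℝ)) t ∂ν
      = (∫ t, g t ∂ν) * ∫ t, h t ∂ν := by
    have e : ∀ i : Fin d, (∫ t, (if i = k then g else if i = l then h else fun _ => (1:ℝ)) t ∂ν)
        = (if i = k then ∫ t, g t ∂ν else 1) * (if i = l then ∫ t, h t ∂ν else 1) := by
      intro i
      by_cases hik : i = k
      · subst hik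
        simp [hkl]
      · by_cases hil : i = l <;> simp [hik, hil, Ne.symm hkl]
    simp only [e, Finset.prod_mul_distrib,
      Finset.prod_ite_eq' Finset.univ k (fun _ => ∫ t, g t ∂ν),
      Finset.prod_ite_eq' Finset.univ l (fun _ => ∫ t, h t ∂ν), Finset.mem_univ, if_true]
  rw [h1, h2] at hint
  exact hint

end PiMeasure

section PiGauss

variable {d : ℕ} {σ : ℝ}

lemma pint1 (hσ : 0 < σ) (k : Fin d) :
    Integrable (fun x : Fin d → ℝ => x k)
      (Measure.pi fun _ => gaussianReal 0 (Real.toNNReal (σ ^ 2))) :=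
  pi_integrable_eval _ (integrable_id_g hσ) k

lemma pval1 (hσ : 0 < σ) (k : Fin d) :
    ∫ x : Fin d → ℝ, x k ∂(Measure.pi fun _ => gaussianReal 0 (Real.toNNReal (σ ^ 2))) = 0 := by
  rw [pi_integral_eval _ (fun t => t) k]
  exact gmean hσ

lemma pint2 (hσ : 0 < σ) (k l : Fin d) :
    Integrable (fun x : Fin d → ℝ => x k * x l)
      (Measure.pi fun _ => gaussianReal 0 (Real.toNNReal (σ ^ 2))) := by
  by_cases hkl : k = l
  · subst hkl
    have h : (fun x : Fin d → ℝ => x k * x k)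
        = fun x : Fin d → ℝ => (fun t : ℝ => t ^ 2) (x k) := by
      funext x
      simp [pow_two]
    rw [h]
    exact pi_integrable_eval _ (integrable_sq_g hσ) k
  · exact pi_integrable_eval2 _ (integrable_id_g hσ) (integrable_id_g hσ) hkl

lemma pval2 (hσ : 0 < σ) (k l : Fin d) :
    ∫ x : Fin d → ℝ, x k * x l ∂(Measure.pi fun _ => gaussianReal 0 (Real.toNNReal (σ ^ 2)))
      = if k = l then σ ^ 2 else 0 := by
  by_cases hkl : k = l
  · subst hkl
    rw [if_pos rfl]
    have h : (fun x : Fin d → ℝ => x k * x k) = fun x : Fin d → ℝ => (fun t : ℝ => t ^ 2) (x k) := by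
      funext x
      simp [pow_two]
    rw [h, pi_integral_eval _ (fun t => t ^ 2) k]
    exact gsq hσ
  · rw [if_neg hkl, pi_integral_eval2 _ (fun t => t) (fun t => t) hkl, gmean hσ, zero_mul]

lemma pnorm_cube_le (hd : 1 ≤ d) (x : Fin d → ℝ) : ‖x‖ ^ 3 ≤ ∑ k, |x k| ^ 3 := by
  haveI : Nonempty (Fin d) := ⟨⟨0, hd⟩⟩
  obtain ⟨k0, -, hk0⟩ := Finset.exists_mem_eq_sup Finset.univ Finset.univ_nonempty
    (fun i : Fin d => ‖x i‖₊)
  have hx : ‖x‖ = |x k0| := by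
    rw [Pi.norm_def, hk0, coe_nnnorm, Real.norm_eq_abs]
  rw [hx]
  exact Finset.single_le_sum (f := fun k => |x k| ^ 3)
    (fun k _ => by positivity) (Finset.mem_univ k0)

lemma pint3 (hd : 1 ≤ d) (hσ : 0 < σ) :
    Integrable (fun x : Fin d → ℝ => ‖x‖ ^ 3)
      (Measure.pi fun _ => gaussianReal 0 (Real.toNNReal (σ ^ 2))) := by
  refine Integrable.mono' (integrable_finset_sum Finset.univ
    (fun k _ => pi_integrable_eval _ (integrable_cube_g hσ) k)) ?_ ?_
  · exact (continuous_norm.pow 3).aestronglyMeasurable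
  · refine Filter.Eventually.of_forall fun x => ?_
    rw [Real.norm_eq_abs, abs_of_nonneg (by positivity)]
    exact pnorm_cube_le hd x

lemma pval3 (hd : 1 ≤ d) (hσ : 0 < σ) :
    ∫ x : Fin d → ℝ, ‖x‖ ^ 3 ∂(Measure.pi fun _ => gaussianReal 0 (Real.toNNReal (σ ^ 2)))
      ≤ (d : ℝ) * (4 * mcube * σ ^ 3) := by
  have hint : Integrable (fun x : Fin d → ℝ => ∑ k, |x k| ^ 3)
      (Measure.pi fun _ => gaussianReal 0 (Real.toNNReal (σ ^ 2))) :=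
    integrable_finset_sum Finset.univ (fun k _ => pi_integrable_eval _ (integrable_cube_g hσ) k)
  calc ∫ x : Fin d → ℝ, ‖x‖ ^ 3 ∂(Measure.pi fun _ => gaussianReal 0 (Real.toNNReal (σ ^ 2)))
      ≤ ∫ x : Fin d → ℝ, ∑ k, |x k| ^ 3
          ∂(Measure.pi fun _ => gaussianReal 0 (Real.toNNReal (σ ^ 2))) :=
        integral_mono (pint3 hd hσ) hint (fun x => pnorm_cube_le hd x)
    _ = ∑ k : Fin d, ∫ x : Fin d → ℝ, |x k| ^ 3
          ∂(Measure.pi fun _ => gaussianReal 0 (Real.toNNReal (σ ^ 2))) :=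
        integral_finset_sum Finset.univ
          (fun k _ => pi_integrable_eval _ (integrable_cube_g hσ) k)
    _ = ∑ _k : Fin d, ∫ t, |t| ^ 3 ∂(gaussianReal 0 (Real.toNNReal (σ ^ 2))) :=
        Finset.sum_congr rfl fun k _ => pi_integral_eval _ (fun t => |t| ^ 3) k
    _ ≤ ∑ _k : Fin d, 4 * mcube * σ ^ 3 :=
        Finset.sum_le_sum fun k _ => gcube hσ
    _ = (d : ℝ) * (4 * mcube * σ ^ 3) := by
        rw [Finset.sum_const, Finset.card_univ, Fintype.card_fin, nsmul_eq_mul]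

end PiGauss

section Calculus

variable {d : ℕ}

lemma pd_eq_fderiv {f : (Fin d → ℝ) → ℝ} (hf : Differentiable ℝ f) (z : Fin d → ℝ) (i : Fin d) :
    pd f i z = fderiv ℝ f z (Pi.single i 1) := by
  have h1 := hasDerivAt_update z i (z i)
  have h2 : HasFDerivAt f (fderiv ℝ f z) (Function.update z i (z i)) := by
    rw [Function.update_eq_self]
    exact (hf z).hasFDerivAt
  exact (h2.comp_hasDerivAt (z i) h1).deriv

lemma fderiv_pi_expand {f : (Fin d → ℝ) → ℝ} (hf : Differentiable ℝ f) (z η : Fin d → ℝ) :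
    fderiv ℝ f z η = ∑ k, η k * pd f k z := by
  have hη : η = ∑ k, η k • (Pi.single k 1 : Fin d → ℝ) := by
    funext j
    simp [Pi.single_apply]
  conv_lhs => rw [hη]
  rw [map_sum]
  refine Finset.sum_congr rfl fun k _ => ?_
  rw [_root_.map_smul, smul_eq_mul, pd_eq_fderiv hf]

lemma taylor_remainder {f : (Fin d → ℝ) → ℝ} (hf : ContDiff ℝ 2 f) {K : ℝ}
    (hK : ∀ x, ‖iteratedFDeriv ℝ 2 f x‖ ≤ K) (z η : Fin d → ℝ) :
    |f (z + η) - f z - fderiv ℝ f z η| ≤ K * ‖η‖ ^ 2 := by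
  have hdiff : Differentiable ℝ f := hf.differentiable two_ne_zero
  have hdf : Differentiable ℝ (fderiv ℝ f) :=
    (hf.fderiv_right (m := 1) (by norm_num)).differentiable one_ne_zero
  have hK0 : 0 ≤ K := le_trans (norm_nonneg _) (hK z)
  have hlip : LipschitzWith (Real.toNNReal K) (fderiv ℝ f) := by
    apply lipschitzWith_of_nnnorm_fderiv_le hdf
    intro x
    rw [← NNReal.coe_le_coe, coe_nnnorm, Real.coe_toNNReal K hK0]
    calc ‖fderiv ℝ (fderiv ℝ f) x‖
        = ‖iteratedFDeriv ℝ 0 (fderiv ℝ (fderiv ℝ f)) x‖ := (norm_iteratedFDeriv_zero (𝕜 := ℝ) (f := fderiv ℝ (fderiv ℝ f)) (x := x)).symm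
      _ = ‖iteratedFDeriv ℝ 1 (fderiv ℝ f) x‖ := norm_iteratedFDeriv_fderiv
      _ = ‖iteratedFDeriv ℝ 2 f x‖ := norm_iteratedFDeriv_fderiv
      _ ≤ K := hK x
  have hmem1 : z ∈ Metric.closedBall z ‖η‖ := Metric.mem_closedBall_self (norm_nonneg η)
  have hmem2 : z + η ∈ Metric.closedBall z ‖η‖ := by
    rw [Metric.mem_closedBall, dist_eq_norm, add_sub_cancel_left]
  have hbound : ∀ x ∈ Metric.closedBall z ‖η‖,
      ‖fderiv ℝ f x - fderiv ℝ f z‖ ≤ K * ‖η‖ := by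
    intro x hx
    have h1 := hlip.dist_le_mul x z
    rw [dist_eq_norm, dist_eq_norm] at h1
    rw [Real.coe_toNNReal K hK0] at h1
    refine h1.trans ?_
    have hxz : ‖x - z‖ ≤ ‖η‖ := by
      rw [← dist_eq_norm]
      exact hx
    exact mul_le_mul_of_nonneg_left hxz hK0
  have hderivs : ∀ x ∈ Metric.closedBall z ‖η‖,
      HasFDerivWithinAt f (fderiv ℝ f x) (Metric.closedBall z ‖η‖) x :=
    fun x _ => (hdiff x).hasFDerivAt.hasFDerivWithinAt
  have h := Convex.norm_image_sub_le_of_norm_hasFDerivWithin_le' hderivs hbound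
    (convex_closedBall z ‖η‖) hmem1 hmem2
  rw [add_sub_cancel_left] at h
  rw [Real.norm_eq_abs] at h
  refine h.trans (le_of_eq (by ring))

end Calculus

section Core

variable {d : ℕ}

lemma scalar_core (hd : 1 ≤ d) {σ : ℝ} (hσ : 0 < σ) {f : (Fin d → ℝ) → ℝ}
    (hf : ContDiff ℝ 2 f) {K : ℝ} (hK : ∀ x, ‖iteratedFDeriv ℝ 2 f x‖ ≤ K)
    (z : Fin d → ℝ) (i : Fin d) :
    Integrable (fun η : Fin d → ℝ => f (z + η) * η i)
      (Measure.pi fun _ => gaussianReal 0 (Real.toNNReal (σ ^ 2))) ∧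
    |(∫ η : Fin d → ℝ, f (z + η) * η i
        ∂(Measure.pi fun _ => gaussianReal 0 (Real.toNNReal (σ ^ 2))))
      - σ ^ 2 * pd f i z| ≤ (d : ℝ) * (4 * mcube) * K * σ ^ 3 := by
  set μd := Measure.pi fun _ : Fin d => gaussianReal 0 (Real.toNNReal (σ ^ 2)) with hμd
  have hdiff : Differentiable ℝ f := hf.differentiable two_ne_zero
  have hK0 : 0 ≤ K := le_trans (norm_nonneg _) (hK z)
  have hdecomp : (fun η : Fin d → ℝ => f (z + η) * η i)
      = fun η => (f z * η i + ∑ k, pd f k z * (η k * η i))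
        + (f (z + η) - f z - fderiv ℝ f z η) * η i := by
    funext η
    have hs : ∑ k, pd f k z * (η k * η i) = (fderiv ℝ f z η) * η i := by
      rw [fderiv_pi_expand hdiff, Finset.sum_mul]
      exact Finset.sum_congr rfl fun k _ => by ring
    rw [hs]
    ring
  have hI1 : Integrable (fun η : Fin d → ℝ => f z * η i) μd := (pint1 hσ i).const_mul _
  have hI2 : Integrable (fun η : Fin d → ℝ => ∑ k, pd f k z * (η k * η i)) μd :=
    integrable_finset_sum _ fun k _ => (pint2 hσ k i).const_mul _
  have hRcont : Continuous (fun η : Fin d → ℝ => f (z + η) - f z - fderiv ℝ f z η) := by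
    refine Continuous.sub (Continuous.sub ?_ continuous_const) (fderiv ℝ f z).continuous
    exact hf.continuous.comp (continuous_const.add continuous_id)
  have hRbound : ∀ η : Fin d → ℝ,
      |(f (z + η) - f z - fderiv ℝ f z η) * η i| ≤ K * ‖η‖ ^ 3 := by
    intro η
    rw [abs_mul]
    have habs : |η i| ≤ ‖η‖ := by
      have h := norm_le_pi_norm η i
      rwa [Real.norm_eq_abs] at h
    have h2 : |f (z + η) - f z - fderiv ℝ f z η| * |η i| ≤ K * ‖η‖ ^ 2 * ‖η‖ :=
      mul_le_mul (taylor_remainder hf hK z η) habs (abs_nonneg _) (by positivity)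
    have h3 : K * ‖η‖ ^ 2 * ‖η‖ = K * ‖η‖ ^ 3 := by ring
    exact le_of_le_of_eq h2 h3
  have hI3 : Integrable (fun η : Fin d → ℝ => (f (z + η) - f z - fderiv ℝ f z η) * η i) μd := by
    refine Integrable.mono' ((pint3 hd hσ).const_mul K)
      ((hRcont.mul (continuous_apply i)).aestronglyMeasurable)
      (Filter.Eventually.of_forall fun η => ?_)
    rw [Real.norm_eq_abs]
    exact hRbound η
  constructor
  · rw [hdecomp]
    have hI12 : Integrable (fun η : Fin d → ℝ =>
        f z * η i + ∑ k, pd f k z * (η k * η i)) μd := hI1.add hI2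
    exact hI12.add hI3
  · have hval : ∫ η, f (z + η) * η i ∂μd
        = σ ^ 2 * pd f i z + ∫ η, (f (z + η) - f z - fderiv ℝ f z η) * η i ∂μd := by
      have hI12 : Integrable (fun η : Fin d → ℝ =>
          f z * η i + ∑ k, pd f k z * (η k * η i)) μd := hI1.add hI2
      rw [hdecomp, integral_add hI12 hI3, integral_add hI1 hI2]
      have v1 : ∫ η, f z * η i ∂μd = 0 := by
        rw [integral_const_mul, pval1 hσ, mul_zero]
      have v2 : ∫ η, ∑ k, pd f k z * (η k * η i) ∂μd = σ ^ 2 * pd f i z := by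
        rw [integral_finset_sum _ (fun k _ => (pint2 hσ k i).const_mul _)]
        have e : ∀ k : Fin d, ∫ η, pd f k z * (η k * η i) ∂μd
            = pd f k z * (if k = i then σ ^ 2 else 0) := fun k => by
          rw [integral_const_mul, pval2 hσ k i]
        simp only [← hμd, e, mul_ite, mul_zero, Finset.sum_ite_eq', Finset.mem_univ, if_true]
        ring
      rw [v1, v2, zero_add]
    rw [hval, add_sub_cancel_left]
    calc |∫ η, (f (z + η) - f z - fderiv ℝ f z η) * η i ∂μd|
        ≤ ∫ η, K * ‖η‖ ^ 3 ∂μd := by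
          rw [← Real.norm_eq_abs]
          refine norm_integral_le_of_norm_le ((pint3 hd hσ).const_mul K)
            (Filter.Eventually.of_forall fun η => ?_)
          rw [Real.norm_eq_abs]
          exact hRbound η
      _ = K * ∫ η, ‖η‖ ^ 3 ∂μd := integral_const_mul K _
      _ ≤ K * ((d : ℝ) * (4 * mcube * σ ^ 3)) :=
          mul_le_mul_of_nonneg_left (pval3 hd hσ) hK0
      _ = (d : ℝ) * (4 * mcube) * K * σ ^ 3 := by ring

end Core


/-- First-order Gaussian coupling expansion: for `G : ℝ^d → ℝ^{d×p}` twice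
continuously differentiable with second-order derivatives bounded by `K`, and `η` with
i.i.d. `N(0,σ²)` coordinates, `E[G(z+η)ᵀ η] = σ² Σᵢ (∂G/∂zᵢ)(z)ᵀ eᵢ + O(K σ³)`,
with a constant depending only on `d` and `p`.  (The `j`-th component of `(∂ᵢG)(z)ᵀ eᵢ`
is `∂(G_{ij})/∂zᵢ (z)`.) -/
theorem gaussian_coupling_first_order (d p : ℕ) (hd : 1 ≤ d) (hp : 1 ≤ p) :
    ∃ c : ℝ, 0 < c ∧
      ∀ (K : ℝ) (G : (Fin d → ℝ) → Fin d → Fin p → ℝ),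
        ContDiff ℝ 2 G →
        (∀ x, ‖iteratedFDeriv ℝ 2 G x‖ ≤ K) →
        ∀ (z : Fin d → ℝ) (σ : ℝ), 0 < σ →
          ‖(∫ η, (fun j : Fin p => ∑ i, G (z + η) i j * η i)
                ∂(Measure.pi fun _ : Fin d => gaussianReal 0 (Real.toNNReal (σ ^ 2))))
              - σ ^ 2 • (fun j : Fin p => ∑ i, pd (fun w => G w i j) i z)‖
            ≤ c * K * σ ^ 3 := by
  have hc0 : (0:ℝ) < (d : ℝ) ^ 2 * (4 * mcube) + 1 := by
    have h1 : (0:ℝ) ≤ (d : ℝ) ^ 2 * (4 * mcube) :=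
      mul_nonneg (sq_nonneg _) (by linarith [mcube_nonneg])
    linarith
  refine ⟨(d : ℝ) ^ 2 * (4 * mcube) + 1, hc0, ?_⟩
  intro K G hG hKG z σ hσ
  set μd := Measure.pi fun _ : Fin d => gaussianReal 0 (Real.toNNReal (σ ^ 2)) with hμd
  have hK0 : 0 ≤ K := le_trans (norm_nonneg _) (hKG 0)
  have hcomp : ∀ (i : Fin d) (j : Fin p), ContDiff ℝ 2 (fun w => G w i j) ∧
      (∀ x, ‖iteratedFDeriv ℝ 2 (fun w => G w i j) x‖ ≤ K) := by
    intro i j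
    set L : (Fin d → Fin p → ℝ) →L[ℝ] ℝ :=
      (ContinuousLinearMap.proj (R := ℝ) (φ := fun _ : Fin p => ℝ) j).comp
        (ContinuousLinearMap.proj (R := ℝ) (φ := fun _ : Fin d => (Fin p → ℝ)) i) with hL
    have hLG : (fun w => G w i j) = fun w => L (G w) := rfl
    have hL1 : ‖L‖ ≤ 1 := by
      refine ContinuousLinearMap.opNorm_le_bound _ zero_le_one fun w => ?_
      rw [one_mul]
      calc ‖L w‖ = ‖w i j‖ := rfl
        _ ≤ ‖w i‖ := norm_le_pi_norm (w i) j
        _ ≤ ‖w‖ := norm_le_pi_norm w i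
    constructor
    · rw [hLG]
      exact hG.continuousLinearMap_comp L
    · intro x
      rw [hLG]
      have hcast : ((2:ℕ) : WithTop ℕ∞) ≤ (2 : WithTop ℕ∞) := by exact_mod_cast le_rfl
      have hcl : (fun w => L (G w)) = (⇑L) ∘ G := rfl
      rw [hcl, L.iteratedFDeriv_comp_left hG.contDiffAt hcast]
      refine le_trans (ContinuousLinearMap.norm_compContinuousMultilinearMap_le _ _) ?_
      calc ‖L‖ * ‖iteratedFDeriv ℝ 2 G x‖ ≤ 1 * K :=
          mul_le_mul hL1 (hKG x) (norm_nonneg _) zero_le_one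
        _ = K := one_mul K
  have hsc := fun (i : Fin d) (j : Fin p) =>
    scalar_core hd hσ (hcomp i j).1 (hcomp i j).2 z i
  set F : (Fin d → ℝ) → (Fin p → ℝ) := fun η => fun j => ∑ i, G (z + η) i j * η i with hF
  have hFcomp : ∀ j : Fin p, Integrable (fun η : Fin d → ℝ => ∑ i, G (z + η) i j * η i) μd :=
    fun j => integrable_finset_sum _ fun i _ => (hsc i j).1
  have hFcont : Continuous F := by
    refine continuous_pi fun j => ?_
    refine continuous_finset_sum _ fun i _ => Continuous.mul ?_ (continuous_apply i)
    exact ((continuous_apply j).comp ((continuous_apply i).comp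
      (hG.continuous.comp (continuous_const.add continuous_id))))
  have hFint : Integrable F μd := by
    refine Integrable.mono'
      (integrable_finset_sum Finset.univ (fun j (_ : j ∈ Finset.univ) => (hFcomp j).abs))
      hFcont.aestronglyMeasurable (Filter.Eventually.of_forall fun η => ?_)
    refine (pi_norm_le_iff_of_nonneg (Finset.sum_nonneg fun j _ => abs_nonneg _)).2 fun j => ?_
    rw [Real.norm_eq_abs]
    exact Finset.single_le_sum (f := fun j : Fin p => |∑ i, G (z + η) i j * η i|)
      (fun j _ => abs_nonneg _) (Finset.mem_univ j)
  have hcompint : ∀ j : Fin p, (∫ η, F η ∂μd) j = ∫ η, F η j ∂μd := by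
    intro j
    exact ((ContinuousLinearMap.proj (R := ℝ) (φ := fun _ : Fin p => ℝ) j).integral_comp_comm
      hFint).symm
  have hbnd0 : (0:ℝ) ≤ ((d : ℝ) ^ 2 * (4 * mcube) + 1) * K * σ ^ 3 :=
    mul_nonneg (mul_nonneg hc0.le hK0) (by positivity)
  refine (pi_norm_le_iff_of_nonneg hbnd0).2 fun j => ?_
  rw [Pi.sub_apply, Pi.smul_apply, hcompint j, smul_eq_mul, Real.norm_eq_abs]
  have h1 : ∫ η, F η j ∂μd = ∑ i, ∫ η, G (z + η) i j * η i ∂μd :=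
    integral_finset_sum _ (fun i _ => (hsc i j).1)
  rw [h1, Finset.mul_sum, ← Finset.sum_sub_distrib]
  refine (Finset.abs_sum_le_sum_abs _ _).trans ?_
  have hKσ : (0:ℝ) ≤ K * σ ^ 3 := mul_nonneg hK0 (by positivity)
  calc ∑ i, |(∫ η, G (z + η) i j * η i ∂μd) - σ ^ 2 * pd (fun w => G w i j) i z|
      ≤ ∑ _i : Fin d, (d : ℝ) * (4 * mcube) * K * σ ^ 3 :=
        Finset.sum_le_sum fun i _ => (hsc i j).2
    _ = (d : ℝ) * ((d : ℝ) * (4 * mcube) * K * σ ^ 3) := by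
        rw [Finset.sum_const, Finset.card_univ, Fintype.card_fin, nsmul_eq_mul]
    _ ≤ ((d : ℝ) ^ 2 * (4 * mcube) + 1) * K * σ ^ 3 := by nlinarith [hKσ]
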